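/- Let λ be a partition of m, n ≥ 1, and T₀ a standard Young tableau of shape λ with descent composition α. Then, as polynomials in the variables x_1,…,x_n, the sum Σ_T x_1^{γ_1}⋯x_n^{γ_n} over all semistandard Young tableaux T of shape λ with entries at most n and std(T) = T₀, where (γ_1,…,γ_n) = wt(T), equals F_α(x_1,…,x_n). -/

import Mathlib

open scoped Classical

namespace QC

/-- A filling assigns a natural-number entry to each cell `(i, j)`;
entries are `0` outside the shape. Values are 1-based. -/
abbrev Filling : Type := ℕ → ℕ → ℕ

/-- The cell `(i, j)` (row `i`, column `j`, both 0-based) lies in the Young diagram of `lam`. -/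
def InShape (lam : List ℕ) (i j : ℕ) : Prop :=
  i < lam.length ∧ j < lam.getD i 0

/-- The finite set of cells of the Young diagram of `lam`. -/
def cells (lam : List ℕ) : Finset (ℕ × ℕ) :=
  (Finset.range lam.length).biUnion fun i =>
    ({i} : Finset ℕ) ×ˢ Finset.range (lam.getD i 0)

/-- `lam` is a partition of `m`: weakly decreasing, positive parts, summing to `m`. -/
def IsPartitionOf (m : ℕ) (lam : List ℕ) : Prop :=
  lam.Pairwise (· ≥ ·) ∧ (∀ x ∈ lam, 0 < x) ∧ lam.sum = m

/-- `a` is a composition of `m`: positive parts summing to `m`. -/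
def IsCompositionOf (m : ℕ) (a : List ℕ) : Prop :=
  (∀ x ∈ a, 0 < x) ∧ a.sum = m

/-- `T` is a semistandard Young tableau of shape `lam`: positive entries on the shape,
zero off the shape, rows weakly increasing, columns strictly increasing. -/
def IsSSYT (lam : List ℕ) (T : Filling) : Prop :=
  (∀ i j, ¬ InShape lam i j → T i j = 0) ∧
  (∀ i j, InShape lam i j → 0 < T i j) ∧
  (∀ i j1 j2, j1 ≤ j2 → InShape lam i j2 → T i j1 ≤ T i j2) ∧
  (∀ i1 i2 j, i1 < i2 → InShape lam i2 j → T i1 j < T i2 j)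

/-- All entries of `T` are at most `n`. -/
def EntriesLE (n : ℕ) (T : Filling) : Prop := ∀ i j, T i j ≤ n

/-- `T` is a standard Young tableau of shape `lam ⊢ m`: a semistandard tableau in which
each of `1, …, m` appears exactly once. -/
def IsSYT (lam : List ℕ) (m : ℕ) (T : Filling) : Prop :=
  IsSSYT lam T ∧ EntriesLE m T ∧
    ∀ k, 1 ≤ k → k ≤ m → ∃! c : ℕ × ℕ, InShape lam c.1 c.2 ∧ T c.1 c.2 = k

/-- `k` is a descent of the standard tableau `T`: `k + 1` lies in a strictly lower row. -/
def IsDescent (lam : List ℕ) (T : Filling) (k : ℕ) : Prop :=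
  ∃ i1 j1 i2 j2, InShape lam i1 j1 ∧ InShape lam i2 j2 ∧
    T i1 j1 = k ∧ T i2 j2 = k + 1 ∧ i1 < i2

/-- The sorted list of descents of `T`, a standard tableau with `m` cells. -/
noncomputable def descentList (lam : List ℕ) (m : ℕ) (T : Filling) : List ℕ :=
  ((Finset.Ico 1 m).filter fun k => IsDescent lam T k).sort (· ≤ ·)

/-- The number of descents of `T`. -/
noncomputable def numDescents (lam : List ℕ) (m : ℕ) (T : Filling) : ℕ :=
  ((Finset.Ico 1 m).filter fun k => IsDescent lam T k).card

/-- The descent composition `(d₁, d₂ - d₁, …, m - d_{s-1})` of a standard tableau. -/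
noncomputable def desComp (lam : List ℕ) (m : ℕ) (T : Filling) : List ℕ :=
  if m = 0 then [] else
    List.zipWith (· - ·) (descentList lam m T ++ [m]) (0 :: descentList lam m T)

/-- The number of cells of `T` carrying the entry `v`. -/
def countEq (lam : List ℕ) (T : Filling) (v : ℕ) : ℕ :=
  ((cells lam).filter fun c => T c.1 c.2 = v).card

/-- The weight of `T` as a list `(γ₁, …, γₙ)`, `γᵢ` the number of entries equal to `i`. -/
def wt (lam : List ℕ) (n : ℕ) (T : Filling) : List ℕ :=
  (List.range n).map fun v => countEq lam T (v + 1)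

/-- The standardization of `T`: cells are relabelled `1, …, m` in order of increasing entry,
breaking ties between equal entries by increasing column index. -/
noncomputable def stdize (lam : List ℕ) (T : Filling) : Filling := fun i j =>
  if InShape lam i j then
    ((cells lam).filter fun c =>
      T c.1 c.2 < T i j ∨ (T c.1 c.2 = T i j ∧ c.2 ≤ j)).card
  else 0

/-- Given a weak composition `g`, `destValue g k` is the unique `i` with
`g₁ + ⋯ + g_{i-1} < k ≤ g₁ + ⋯ + g_i` (and `0` for `k = 0`). -/
def destValue (g : List ℕ) (k : ℕ) : ℕ :=
  ((List.range g.length).filter fun i => (g.take i).sum < k).length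

/-- The destandardization `D_g(T₀)`: each entry `j` of `T₀` is replaced by the unique `i`
with `g₁ + ⋯ + g_{i-1} < j ≤ g₁ + ⋯ + g_i`. -/
def Dmap (g : List ℕ) (T : Filling) : Filling := fun i j => destValue g (T i j)

/-- `Refines a b`: the composition `b` refines `a`, i.e. `b` can be cut into consecutive
blocks whose sums are the parts of `a` in order. -/
def Refines (a b : List ℕ) : Prop :=
  ∃ L : List (List ℕ), L.flatten = b ∧ L.map List.sum = a

/-- Strict lexicographic order on integer sequences. -/
def lexLt (a b : List ℕ) : Prop := List.Lex (· < ·) a b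

/-- Weak lexicographic order on integer sequences. -/
def lexLe (a b : List ℕ) : Prop := a = b ∨ lexLt a b

/-- The largest entry of `T`. -/
def maxEntry (lam : List ℕ) (T : Filling) : ℕ :=
  (cells lam).sup fun c => T c.1 c.2

/-- The weight of `T` (over all values), with zero parts deleted. -/
def wtFull (lam : List ℕ) (T : Filling) : List ℕ :=
  ((List.range (maxEntry lam T)).map fun v => countEq lam T (v + 1)).filter (· ≠ 0)

/-- The proper partial sums `α₁, α₁ + α₂, …, α₁ + ⋯ + α_{s-1}` of a composition. -/
def innerSums (a : List ℕ) : List ℕ :=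
  (List.range a.length).tail.map fun t => (a.take t).sum

/-- `f : Fin m → Fin n` encodes a sequence `1 ≤ i₁ ≤ i₂ ≤ … ≤ i_m ≤ n` (via `i_t = f (t-1) + 1`)
which ascends strictly, `i_j < i_{j+1}`, at every proper partial sum `j` of `a`. -/
def IsFWord (m n : ℕ) (a : List ℕ) (f : Fin m → Fin n) : Prop :=
  Monotone f ∧
    ∀ (t : ℕ) (ht : t + 1 < m), (t + 1) ∈ innerSums a →
      f ⟨t, Nat.lt_of_succ_lt ht⟩ < f ⟨t + 1, ht⟩

/-- The fundamental quasisymmetric polynomial `F_a(x₁, …, xₙ)` of degree `m`. -/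
noncomputable def Fpoly (m n : ℕ) (a : List ℕ) : MvPolynomial (Fin n) ℤ :=
  ∑ f ∈ Finset.univ.filter (fun f : Fin m → Fin n => IsFWord m n a f),
    ∏ t : Fin m, MvPolynomial.X (f t)

/-- The monomial `x₁^{γ₁} ⋯ xₙ^{γₙ}` of a tableau `T` of weight `γ`. -/
noncomputable def wtMonomial (lam : List ℕ) (n : ℕ) (T : Filling) :
    MvPolynomial (Fin n) ℤ :=
  ∏ i : Fin n, MvPolynomial.X i ^ countEq lam T (i.val + 1)

/-- `Rot` of a word `w` of length `k` on `{1, …, n}`: the `j`-th letter of `rot k n w`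
is `n + 1 - w_{k+1-j}` (1-based), here written 0-based. -/
def rot (k n : ℕ) (w : Fin k → ℕ) : Fin k → ℕ := fun j =>
  n + 1 - w ⟨k - 1 - j.val, by have := j.isLt; omega⟩

/-- The descent set of a word `w = w₁ ⋯ w_k`: positions `i ∈ {1, …, k-1}` with `wᵢ > w_{i+1}`
(1-based positions; `w ⟨i-1,_⟩` is `wᵢ`). -/
noncomputable def wordDes (k : ℕ) (w : Fin k → ℕ) : Finset ℕ :=
  (Finset.Ico 1 k).filter fun i =>
    ∃ (h1 : i - 1 < k) (h2 : i < k), w ⟨i, h2⟩ < w ⟨i - 1, h1⟩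

/-- The descent composition of a word of length `k`. -/
noncomputable def wordDesComp (k : ℕ) (w : Fin k → ℕ) : List ℕ :=
  if k = 0 then []
  else
    List.zipWith (· - ·) ((wordDes k w).sort (· ≤ ·) ++ [k])
      (0 :: (wordDes k w).sort (· ≤ ·))

/-!
Standardization ranks the cells of `T` by the key `(entry, column)`. Every `T` in the fiber is
`i ∘ T₀` for a word `i₁ ≤ ⋯ ≤ i_m`, and `std (i ∘ T₀) = T₀` exactly when that key increases along
`T₀`. At a non-descent `k` of `T₀` the cell of `k + 1` lies weakly above the cell of `k`, hence
strictly to its right, so `i_k = i_{k+1}` is allowed. At a descent it lies strictly below, and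
`i_k = i_{k+1}` is impossible: of two equal entries of a semistandard tableau in different rows,
the lower one is strictly to the left. So the fiber is in weight-preserving bijection with the
sequences summed in `F_α`.
-/

open Finset

lemma add_sum_take_zipWith_sub {p : ℕ} {D : List ℕ} (hD : (p :: D).Pairwise (· ≤ ·)) (M : ℕ)
    {i : ℕ} (hi : i < D.length) :
    p + ((List.zipWith (· - ·) (D ++ [M]) (p :: D)).take (i + 1)).sum = D[i] := by
  induction D generalizing p i with
  | nil => simp at hi
  | cons a D ih =>
    have hpa : p ≤ a := List.rel_of_pairwise_cons hD (List.mem_cons_self ..)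
    cases i with
    | zero => simp; omega
    | succ i =>
      have := ih (List.pairwise_cons.1 hD).2 (i := i) (by simpa using hi)
      simp only [List.cons_append, List.zipWith_cons_cons, List.take_succ_cons, List.sum_cons,
        List.getElem_cons_succ]
      omega

lemma innerSums_zipWith_sub {D : List ℕ} (hD : D.Pairwise (· ≤ ·)) (M : ℕ) :
    innerSums (List.zipWith (· - ·) (D ++ [M]) (0 :: D)) = D := by
  have h0 : (0 :: D).Pairwise (· ≤ ·) := List.pairwise_cons.2 ⟨fun _ _ => Nat.zero_le _, hD⟩
  apply List.ext_getElem
  · simp [innerSums]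
  · intro i _ hi
    simpa [innerSums, Nat.add_comm 1 i] using add_sum_take_zipWith_sub h0 M hi

lemma innerSums_desComp (lam : List ℕ) (m : ℕ) (T₀ : Filling) :
    innerSums (desComp lam m T₀) = descentList lam m T₀ := by
  unfold desComp
  split_ifs with hm
  · simp [innerSums, descentList, hm]
  · exact innerSums_zipWith_sub (Finset.pairwise_sort _ _) m

lemma mem_descentList {lam : List ℕ} {m : ℕ} {T₀ : Filling} {k : ℕ} :
    k ∈ descentList lam m T₀ ↔ (1 ≤ k ∧ k < m) ∧ IsDescent lam T₀ k := by
  simp [descentList]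

lemma isFWord_desComp_iff {lam : List ℕ} {m n : ℕ} {T₀ : Filling} {f : Fin m → Fin n} :
    IsFWord m n (desComp lam m T₀) f ↔
      Monotone f ∧ ∀ (t : ℕ) (ht : t + 1 < m), IsDescent lam T₀ (t + 1) →
        f ⟨t, Nat.lt_of_succ_lt ht⟩ < f ⟨t + 1, ht⟩ := by
  unfold IsFWord
  refine and_congr_right fun _ => forall₂_congr fun t ht => ?_
  simp [innerSums_desComp, mem_descentList, ht]

lemma strictMono_fin_of_lt_add_one {α : Type*} [Preorder α] {m : ℕ} {g : Fin m → α}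
    (h : ∀ (t : ℕ) (ht : t + 1 < m), g ⟨t, Nat.lt_of_succ_lt ht⟩ < g ⟨t + 1, ht⟩) :
    StrictMono g := by
  cases m with
  | zero => exact fun a => a.elim0
  | succ m => exact Fin.strictMono_iff_lt_succ.2 fun i => h i (by simp)

lemma mem_cells {lam : List ℕ} {c : ℕ × ℕ} : c ∈ cells lam ↔ InShape lam c.1 c.2 := by
  obtain ⟨i, j⟩ := c
  simp [cells, InShape]

namespace IsSSYT

variable {lam : List ℕ} {T : Filling} {c d : ℕ × ℕ}

lemma apply_le_apply (hT : IsSSYT lam T) (hd : InShape lam d.1 d.2) (h₁ : c.1 ≤ d.1)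
    (h₂ : c.2 ≤ d.2) : T c.1 c.2 ≤ T d.1 d.2 := by
  have hcol : T c.1 c.2 ≤ T d.1 c.2 := by
    rcases h₁.lt_or_eq with h | h
    · exact (hT.2.2.2 _ _ _ h ⟨hd.1, h₂.trans_lt hd.2⟩).le
    · rw [h]
  exact hcol.trans (hT.2.2.1 _ _ _ h₂ hd)

lemma apply_lt_apply (hT : IsSSYT lam T) (hd : InShape lam d.1 d.2) (h₁ : c.1 < d.1)
    (h₂ : c.2 ≤ d.2) : T c.1 c.2 < T d.1 d.2 :=
  (hT.2.2.2 _ _ _ h₁ ⟨hd.1, h₂.trans_lt hd.2⟩).trans_le (hT.2.2.1 _ _ _ h₂ hd)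

lemma col_lt_of_lt_of_row_le (hT : IsSSYT lam T) (hc : InShape lam c.1 c.2)
    (hlt : T c.1 c.2 < T d.1 d.2) (hrow : d.1 ≤ c.1) : c.2 < d.2 :=
  lt_of_not_ge fun hcol => (hT.apply_le_apply hc hrow hcol).not_gt hlt

lemma col_lt_of_eq_of_row_lt (hT : IsSSYT lam T) (hd : InShape lam d.1 d.2)
    (heq : T c.1 c.2 = T d.1 d.2) (hrow : c.1 < d.1) : d.2 < c.2 :=
  lt_of_not_ge fun hcol => (hT.apply_lt_apply hd hrow hcol).ne heq

end IsSSYT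

section CellOf

variable {lam : List ℕ} {m : ℕ} {T₀ : Filling} (hT₀ : IsSYT lam m T₀)

noncomputable def cellOf (k : Fin m) : ℕ × ℕ :=
  (hT₀.2.2 (k + 1) (Nat.le_add_left 1 k) k.isLt).exists.choose

lemma inShape_cellOf (k : Fin m) : InShape lam (cellOf hT₀ k).1 (cellOf hT₀ k).2 :=
  (hT₀.2.2 (k + 1) (Nat.le_add_left 1 k) k.isLt).exists.choose_spec.1

lemma apply_cellOf (k : Fin m) : T₀ (cellOf hT₀ k).1 (cellOf hT₀ k).2 = k + 1 :=
  (hT₀.2.2 (k + 1) (Nat.le_add_left 1 k) k.isLt).exists.choose_spec.2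

lemma cellOf_eq_iff {k : Fin m} {c : ℕ × ℕ} (hc : InShape lam c.1 c.2) :
    cellOf hT₀ k = c ↔ T₀ c.1 c.2 = k + 1 := by
  refine ⟨fun h => h ▸ apply_cellOf hT₀ k, fun h => ?_⟩
  exact (hT₀.2.2 (k + 1) (Nat.le_add_left 1 k) k.isLt).unique
    ⟨inShape_cellOf hT₀ k, apply_cellOf hT₀ k⟩ ⟨hc, h⟩

lemma exists_cellOf_eq {c : ℕ × ℕ} (hc : InShape lam c.1 c.2) : ∃ k, cellOf hT₀ k = c := by
  have hpos := hT₀.1.2.1 _ _ hc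
  have hle := hT₀.2.1 c.1 c.2
  exact ⟨⟨T₀ c.1 c.2 - 1, by omega⟩, (cellOf_eq_iff hT₀ hc).2 (by simp; omega)⟩

lemma cellOf_injective : Function.Injective (cellOf hT₀) := fun k l h =>
  Fin.ext (Nat.succ_injective ((apply_cellOf hT₀ k).symm.trans (h ▸ apply_cellOf hT₀ l)))

lemma card_filter_cells (P : ℕ × ℕ → Prop) [DecidablePred P] :
    #{c ∈ cells lam | P c} = #{k | P (cellOf hT₀ k)} := by
  have himage : univ.image (cellOf hT₀) = cells lam := by
    ext c
    simp only [mem_image, mem_univ, true_and, mem_cells]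
    exact ⟨fun ⟨k, hk⟩ => hk ▸ inShape_cellOf hT₀ k, exists_cellOf_eq hT₀⟩
  rw [← himage, filter_image, card_image_of_injective _ (cellOf_injective hT₀)]

lemma isDescent_iff (t : ℕ) (ht : t + 1 < m) :
    IsDescent lam T₀ (t + 1) ↔
      (cellOf hT₀ ⟨t, Nat.lt_of_succ_lt ht⟩).1 < (cellOf hT₀ ⟨t + 1, ht⟩).1 := by
  constructor
  · rintro ⟨i₁, j₁, i₂, j₂, h₁, h₂, hv₁, hv₂, hrow⟩
    rwa [(cellOf_eq_iff hT₀ (c := (i₁, j₁)) h₁).2 hv₁, (cellOf_eq_iff hT₀ (c := (i₂, j₂)) h₂).2 hv₂]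
  · intro hrow
    exact ⟨_, _, _, _, inShape_cellOf hT₀ _, inShape_cellOf hT₀ _, apply_cellOf hT₀ _,
      apply_cellOf hT₀ _, hrow⟩

end CellOf

def readKey (T : Filling) (c : ℕ × ℕ) : ℕ ×ₗ ℕ := toLex (T c.1 c.2, c.2)

lemma stdize_of_inShape {lam : List ℕ} (T : Filling) {c : ℕ × ℕ} (hc : InShape lam c.1 c.2) :
    stdize lam T c.1 c.2 = #{d ∈ cells lam | readKey T d ≤ readKey T c} := by
  simp only [stdize, if_pos hc, readKey, Prod.Lex.toLex_le_toLex]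

section Fiber

variable {lam : List ℕ} {m n : ℕ} {T₀ : Filling} (hT₀ : IsSYT lam m T₀)

lemma stdize_eq_iff_strictMono {T : Filling} :
    stdize lam T = T₀ ↔ StrictMono (readKey T ∘ cellOf hT₀) := by
  constructor
  · intro hstd k l hkl
    refine lt_of_not_ge fun hle => hkl.not_ge ?_
    have hcard : stdize lam T (cellOf hT₀ l).1 (cellOf hT₀ l).2 ≤
        stdize lam T (cellOf hT₀ k).1 (cellOf hT₀ k).2 := by
      rw [stdize_of_inShape T (inShape_cellOf hT₀ l), stdize_of_inShape T (inShape_cellOf hT₀ k)]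
      exact card_le_card fun d hd => by
        simp only [mem_filter] at hd ⊢
        exact ⟨hd.1, hd.2.trans hle⟩
    rw [hstd, apply_cellOf hT₀, apply_cellOf hT₀] at hcard
    exact Fin.le_def.2 (by omega)
  · intro hmono
    funext i j
    by_cases h : InShape lam i j
    · obtain ⟨k, hk⟩ := exists_cellOf_eq hT₀ (c := (i, j)) h
      obtain ⟨rfl, rfl⟩ : (cellOf hT₀ k).1 = i ∧ (cellOf hT₀ k).2 = j := by simp [hk]
      rw [stdize_of_inShape T (inShape_cellOf hT₀ k), apply_cellOf hT₀,
        card_filter_cells hT₀ (fun d => readKey T d ≤ readKey T (cellOf hT₀ k))]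
      simp only [← Function.comp_apply (f := readKey T), hmono.le_iff_le, filter_ge_eq_Iic,
        Fin.card_Iic]
    · simp only [stdize, if_neg h, hT₀.1.1 i j h]

section StrictMonoReadKey

variable {T : Filling} (hmono : StrictMono (readKey T ∘ cellOf hT₀)) {c d : ℕ × ℕ}
  (hc : InShape lam c.1 c.2) (hd : InShape lam d.1 d.2)
include hmono hc hd

lemma readKey_le_readKey_iff : readKey T c ≤ readKey T d ↔ T₀ c.1 c.2 ≤ T₀ d.1 d.2 := by
  obtain ⟨k, rfl⟩ := exists_cellOf_eq hT₀ hc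
  obtain ⟨l, rfl⟩ := exists_cellOf_eq hT₀ hd
  rw [apply_cellOf hT₀, apply_cellOf hT₀, Nat.add_le_add_iff_right, ← Fin.le_def]
  exact hmono.le_iff_le

lemma readKey_lt_readKey_iff : readKey T c < readKey T d ↔ T₀ c.1 c.2 < T₀ d.1 d.2 := by
  obtain ⟨k, rfl⟩ := exists_cellOf_eq hT₀ hc
  obtain ⟨l, rfl⟩ := exists_cellOf_eq hT₀ hd
  rw [apply_cellOf hT₀, apply_cellOf hT₀, Nat.add_lt_add_iff_right, ← Fin.lt_def]
  exact hmono.lt_iff_lt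

end StrictMonoReadKey

lemma isSSYT_of_strictMono_readKey {T : Filling} (h0 : ∀ i j, ¬ InShape lam i j → T i j = 0)
    (hpos : ∀ i j, InShape lam i j → 0 < T i j) (hmono : StrictMono (readKey T ∘ cellOf hT₀)) :
    IsSSYT lam T := by
  refine ⟨h0, hpos, fun i j₁ j₂ hj h₂ => ?_, fun i₁ i₂ j hi h₂ => ?_⟩
  · have h₁ : InShape lam i j₁ := ⟨h₂.1, hj.trans_lt h₂.2⟩
    have := (readKey_le_readKey_iff hT₀ hmono (c := (i, j₁)) (d := (i, j₂)) h₁ h₂).2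
      (hT₀.1.2.2.1 i j₁ j₂ hj h₂)
    simp only [readKey, Prod.Lex.toLex_le_toLex'] at this
    exact this.1
  · by_cases h₁ : InShape lam i₁ j
    · have := (readKey_lt_readKey_iff hT₀ hmono (c := (i₁, j)) (d := (i₂, j)) h₁ h₂).2
        (hT₀.1.2.2.2 i₁ i₂ j hi h₂)
      simp only [readKey, Prod.Lex.toLex_lt_toLex', lt_irrefl] at this
      exact this.1.lt_of_ne fun h => this.2 h
    · rw [h0 i₁ j h₁]
      exact hpos i₂ j h₂

/-- The tableau `T` with `T c = i_{T₀ c}` for the word `i₁ ⋯ i_m` that `f` encodes as in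
`IsFWord`. -/
noncomputable def fill (lam : List ℕ) (T₀ : Filling) (f : Fin m → Fin n) : Filling := fun i j =>
  if h : InShape lam i j ∧ T₀ i j - 1 < m then f ⟨T₀ i j - 1, h.2⟩ + 1 else 0

lemma fill_of_not_inShape (f : Fin m → Fin n) {i j : ℕ} (h : ¬ InShape lam i j) :
    fill lam T₀ f i j = 0 := by
  simp [fill, h]

lemma fill_cellOf (f : Fin m → Fin n) (k : Fin m) :
    fill lam T₀ f (cellOf hT₀ k).1 (cellOf hT₀ k).2 = f k + 1 := by
  simp [fill, inShape_cellOf hT₀ k, apply_cellOf hT₀ k]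

include hT₀ in
lemma fill_pos (f : Fin m → Fin n) {i j : ℕ} (h : InShape lam i j) : 0 < fill lam T₀ f i j := by
  obtain ⟨k, hk⟩ := exists_cellOf_eq hT₀ (c := (i, j)) h
  obtain ⟨rfl, rfl⟩ : (cellOf hT₀ k).1 = i ∧ (cellOf hT₀ k).2 = j := by simp [hk]
  rw [fill_cellOf hT₀]
  exact Nat.succ_pos _

lemma entriesLE_fill (f : Fin m → Fin n) : EntriesLE n (fill lam T₀ f) := fun i j => by
  unfold fill
  split_ifs
  exacts [Fin.is_lt _, Nat.zero_le n]

include hT₀ in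
lemma fill_injective : Function.Injective (fill (m := m) (n := n) lam T₀) := fun f g h => by
  funext k
  have := congrFun₂ h (cellOf hT₀ k).1 (cellOf hT₀ k).2
  rw [fill_cellOf hT₀, fill_cellOf hT₀] at this
  exact Fin.ext (by omega)

include hT₀ in
lemma exists_fill_eq {T : Filling} (hT : IsSSYT lam T) (hle : EntriesLE n T) :
    ∃ f : Fin m → Fin n, fill lam T₀ f = T := by
  have hval : ∀ k, T (cellOf hT₀ k).1 (cellOf hT₀ k).2 - 1 < n := fun k => by
    have := hT.2.1 _ _ (inShape_cellOf hT₀ k)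
    have := hle (cellOf hT₀ k).1 (cellOf hT₀ k).2
    omega
  refine ⟨fun k => ⟨_, hval k⟩, funext₂ fun i j => ?_⟩
  by_cases h : InShape lam i j
  · obtain ⟨k, hk⟩ := exists_cellOf_eq hT₀ (c := (i, j)) h
    obtain ⟨rfl, rfl⟩ : (cellOf hT₀ k).1 = i ∧ (cellOf hT₀ k).2 = j := by simp [hk]
    have := hT.2.1 _ _ h
    rw [fill_cellOf hT₀]
    dsimp only
    omega
  · rw [fill_of_not_inShape _ h, hT.1 i j h]

lemma readKey_fill_cellOf (f : Fin m → Fin n) (k : Fin m) :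
    readKey (fill lam T₀ f) (cellOf hT₀ k) = toLex ((f k : ℕ) + 1, (cellOf hT₀ k).2) := by
  rw [readKey, fill_cellOf hT₀]

lemma strictMono_readKey_fill_of_isFWord {f : Fin m → Fin n}
    (hf : IsFWord m n (desComp lam m T₀) f) :
    StrictMono (readKey (fill lam T₀ f) ∘ cellOf hT₀) := by
  obtain ⟨hmono, hdes⟩ := isFWord_desComp_iff.1 hf
  refine strictMono_fin_of_lt_add_one fun t ht => ?_
  simp only [Function.comp_apply, readKey_fill_cellOf hT₀, Prod.Lex.toLex_lt_toLex]
  have hle : (⟨t, Nat.lt_of_succ_lt ht⟩ : Fin m) ≤ ⟨t + 1, ht⟩ := Fin.le_def.2 (Nat.le_succ t)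
  rcases (hmono hle).lt_or_eq with hlt | heq
  · exact Or.inl (Nat.succ_lt_succ (Fin.lt_def.1 hlt))
  · refine Or.inr ⟨by rw [heq], ?_⟩
    have hrow := not_lt.1 fun h => (hdes t ht ((isDescent_iff hT₀ t ht).2 h)).ne heq
    refine hT₀.1.col_lt_of_lt_of_row_le (inShape_cellOf hT₀ _) ?_ hrow
    rw [apply_cellOf hT₀, apply_cellOf hT₀]
    exact Nat.lt_succ_self _

lemma isFWord_of_strictMono_readKey_fill {f : Fin m → Fin n} (hT : IsSSYT lam (fill lam T₀ f))
    (hmono : StrictMono (readKey (fill lam T₀ f) ∘ cellOf hT₀)) :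
    IsFWord m n (desComp lam m T₀) f := by
  refine isFWord_desComp_iff.2 ⟨fun k l hkl => ?_, fun t ht hdes => ?_⟩
  · have := hmono.monotone hkl
    simp only [Function.comp_apply, readKey_fill_cellOf hT₀, Prod.Lex.toLex_le_toLex'] at this
    exact Fin.le_def.2 (by omega)
  · have := hmono (show (⟨t, Nat.lt_of_succ_lt ht⟩ : Fin m) < ⟨t + 1, ht⟩ from
      Fin.lt_def.2 (Nat.lt_succ_self t))
    simp only [Function.comp_apply, readKey_fill_cellOf hT₀, Prod.Lex.toLex_lt_toLex] at this
    rcases this with hlt | ⟨heq, hcol⟩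
    · exact Fin.lt_def.2 (by omega)
    · refine absurd hcol (not_lt.2 (hT.col_lt_of_eq_of_row_lt (inShape_cellOf hT₀ _) ?_
        ((isDescent_iff hT₀ t ht).1 hdes)).le)
      rw [fill_cellOf hT₀, fill_cellOf hT₀]
      exact heq

include hT₀ in
lemma fill_mem_fiber_iff (f : Fin m → Fin n) :
    (IsSSYT lam (fill lam T₀ f) ∧ EntriesLE n (fill lam T₀ f) ∧ stdize lam (fill lam T₀ f) = T₀) ↔
      IsFWord m n (desComp lam m T₀) f := by
  rw [stdize_eq_iff_strictMono hT₀]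
  refine ⟨fun ⟨hT, _, hkey⟩ => isFWord_of_strictMono_readKey_fill hT₀ hT hkey, fun hf => ?_⟩
  have hkey := strictMono_readKey_fill_of_isFWord hT₀ hf
  exact ⟨isSSYT_of_strictMono_readKey hT₀ (fun _ _ => fill_of_not_inShape f)
    (fun _ _ => fill_pos hT₀ f) hkey, entriesLE_fill f, hkey⟩

include hT₀ in
noncomputable def fiberEquiv :
    {f : Fin m → Fin n // IsFWord m n (desComp lam m T₀) f} ≃
      {T : Filling // IsSSYT lam T ∧ EntriesLE n T ∧ stdize lam T = T₀} :=
  Equiv.ofBijective (fun f => ⟨fill lam T₀ f.1, (fill_mem_fiber_iff hT₀ f.1).2 f.2⟩) <| by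
    refine ⟨fun f g h => Subtype.ext (fill_injective hT₀ (congrArg Subtype.val h)), ?_⟩
    rintro ⟨T, hT⟩
    obtain ⟨f, rfl⟩ := exists_fill_eq hT₀ hT.1 hT.2.1
    exact ⟨⟨f, (fill_mem_fiber_iff hT₀ f).1 hT⟩, rfl⟩

include hT₀ in
lemma wtMonomial_fill (f : Fin m → Fin n) :
    wtMonomial lam n (fill lam T₀ f) = ∏ t, MvPolynomial.X (f t) := by
  rw [wtMonomial, ← prod_fiberwise' univ f]
  refine prod_congr rfl fun i _ => ?_
  rw [prod_const, countEq, card_filter_cells hT₀]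
  simp only [fill_cellOf hT₀, Nat.add_right_cancel_iff, ← Fin.ext_iff]

end Fiber

theorem sum_monomials_over_fiber_eq_Fpoly_general (m n : ℕ) (lam : List ℕ)
    (T₀ : Filling) (hT₀ : IsSYT lam m T₀) :
    ∑ᶠ T : {T : Filling // IsSSYT lam T ∧ EntriesLE n T ∧ stdize lam T = T₀},
        wtMonomial lam n T.val =
      Fpoly m n (desComp lam m T₀) := by
  rw [← finsum_comp_equiv (fiberEquiv hT₀), finsum_eq_sum_of_fintype, Fpoly,
    sum_subtype (p := IsFWord m n (desComp lam m T₀)) _ fun f => by simp]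
  exact sum_congr rfl fun f _ => wtMonomial_fill hT₀ f.1

/-- For a standard Young tableau `T₀` of shape `lam ⊢ m` with descent composition `alpha`,
the sum of the weight monomials `x₁^{γ₁} ⋯ xₙ^{γₙ}` over all semistandard tableaux of shape
`lam` with entries at most `n` standardizing to `T₀` equals `F_alpha(x₁, …, xₙ)`. -/
theorem sum_monomials_over_fiber_eq_Fpoly (m n : ℕ) (hn : 1 ≤ n) (lam : List ℕ)
    (hlam : IsPartitionOf m lam) (T₀ : Filling) (hT₀ : IsSYT lam m T₀) :
    ∑ᶠ T : {T : Filling // IsSSYT lam T ∧ EntriesLE n T ∧ stdize lam T = T₀},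
        wtMonomial lam n T.val =
      Fpoly m n (desComp lam m T₀) :=
  sum_monomials_over_fiber_eq_Fpoly_general m n lam T₀ hT₀

end QC
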